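/- Let n ≥ 1 and let φ : Mₙ → ℝ be smooth, nonnegative, supported in the closed unit ball of the Frobenius norm, with ∫_{Mₙ} φ = 1. Fix K = 5 and for ε > 0 define φ_ε(A) = ε^{−n²K} φ(ε^{−K} A) and the mollified quasi-distance d_F̃^ε(A) = ∫_{Mₙ} φ_ε(A − B) d_F̃(B) dB. Then for every C' > 0 there exists ε₀ > 0 such that for all ε ∈ (0, ε₀) and all A ∈ Mₙ with ‖A‖ ≤ C', the function d_F̃^ε is differentiable at A and the operator norm of its Fréchet derivative (with Mₙ carrying the Frobenius norm) is at most √(2(F(A) + ε^{K−1})). -/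

import Mathlib

open Matrix MeasureTheory

attribute [local instance] Matrix.frobeniusNormedAddCommGroup Matrix.frobeniusNormedSpace

/-- Lebesgue measure on `Mₙ`, identified with `ℝ^{n²}` entrywise. -/
noncomputable local instance matrixMeasureSpace {n : ℕ} :
    MeasureSpace (Matrix (Fin n) (Fin n) ℝ) :=
  inferInstanceAs (MeasureSpace (Fin n → Fin n → ℝ))

/-- The Saint Venant–Kirchhoff potential `F(A) = (1/4)‖AAᵀ − I‖²` with the Frobenius norm. -/
noncomputable def potF {n : ℕ} (A : Matrix (Fin n) (Fin n) ℝ) : ℝ :=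
  (1 / 4) * ‖A * Aᵀ - 1‖ ^ 2

/-- Frobenius distance from `A` to the set of orthogonal matrices with determinant `1`. -/
noncomputable def rhoPlus {n : ℕ} (A : Matrix (Fin n) (Fin n) ℝ) : ℝ :=
  Metric.infDist A {Q : Matrix (Fin n) (Fin n) ℝ | Q * Qᵀ = 1 ∧ Q.det = 1}

/-- Frobenius distance from `A` to the set of orthogonal matrices with determinant `-1`. -/
noncomputable def rhoMinus {n : ℕ} (A : Matrix (Fin n) (Fin n) ℝ) : ℝ :=
  Metric.infDist A {Q : Matrix (Fin n) (Fin n) ℝ | Q * Qᵀ = 1 ∧ Q.det = -1}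

/-- The quasi-potential profile `f̃`. -/
noncomputable def ftilde (r : ℝ) : ℝ :=
  if r ≤ 1 then (1 / 4) * r ^ 2 * (2 - r) ^ 2 else 1 / 4

/-- `g(r) = ∫₀^r √(2 f̃(s)) ds`. -/
noncomputable def gfun (r : ℝ) : ℝ := ∫ s in (0 : ℝ)..r, Real.sqrt (2 * ftilde s)

/-- The surface tension constant `c = 2 g(1)`. -/
noncomputable def cF : ℝ := 2 * gfun 1

/-- The quasi-distance function `d_F̃`. -/
noncomputable def dF {n : ℕ} (A : Matrix (Fin n) (Fin n) ℝ) : ℝ :=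
  if rhoMinus A ≤ 1 then gfun (rhoMinus A)
  else if rhoPlus A ≤ 1 then cF - gfun (rhoPlus A)
  else cF / 2

/-- The rescaled mollifier `φ_ε(A) = ε^{−n²K} φ(ε^{−K} A)` with `K = 5`. -/
noncomputable def mollifier {n : ℕ} (φ : Matrix (Fin n) (Fin n) ℝ → ℝ) (ε : ℝ)
    (A : Matrix (Fin n) (Fin n) ℝ) : ℝ :=
  (ε ^ (n ^ 2 * 5))⁻¹ * φ ((ε ^ 5)⁻¹ • A)

/-- The mollified quasi-distance `d_F̃^ε = φ_ε * d_F̃`. -/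
noncomputable def dFeps {n : ℕ} (φ : Matrix (Fin n) (Fin n) ℝ → ℝ) (ε : ℝ)
    (A : Matrix (Fin n) (Fin n) ℝ) : ℝ :=
  ∫ B, mollifier φ ε (A - B) * dF B

noncomputable def fpl (r : ℝ) : ℝ := min r 1 * (2 - min r 1)

lemma fpl_nonneg {r : ℝ} (hr : 0 ≤ r) : 0 ≤ fpl r := by
  have h1 : 0 ≤ min r 1 := le_min hr zero_le_one
  have h2 : min r 1 ≤ 1 := min_le_right _ _
  exact mul_nonneg h1 (by linarith)

lemma fpl_le_one (r : ℝ) : fpl r ≤ 1 := by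
  have h2 : min r 1 ≤ 1 := min_le_right _ _
  unfold fpl; nlinarith [sq_nonneg (1 - min r 1)]

lemma fpl_mono {a b : ℝ} (hab : a ≤ b) : fpl a ≤ fpl b := by
  have h1 : min a 1 ≤ min b 1 := min_le_min hab le_rfl
  have h2 : min a 1 ≤ 1 := min_le_right _ _
  have h3 : min b 1 ≤ 1 := min_le_right _ _
  unfold fpl; nlinarith

lemma fpl_one : fpl 1 = 1 := by norm_num [fpl]

lemma min1_lip (x y : ℝ) : |min x 1 - min y 1| ≤ |x - y| := by
  rcases le_total x 1 with h | h <;> rcases le_total y 1 with h' | h' <;>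
    simp only [min_eq_left, min_eq_right, h, h'] <;> rw [abs_le] <;>
    constructor <;> nlinarith [le_abs_self (x - y), neg_abs_le (x - y)]

lemma fpl_lip {a b : ℝ} (ha : 0 ≤ a) (hb : 0 ≤ b) : |fpl a - fpl b| ≤ 2 * |a - b| := by
  have h1 := min1_lip a b
  have h2 : min a 1 ≤ 1 := min_le_right _ _
  have h3 : min b 1 ≤ 1 := min_le_right _ _
  have h2' : 0 ≤ min a 1 := le_min ha zero_le_one
  have h3' : 0 ≤ min b 1 := le_min hb zero_le_one
  have he : fpl a - fpl b = (min a 1 - min b 1) * (2 - min a 1 - min b 1) := by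
    unfold fpl; ring
  rw [he, abs_mul]
  have h4 : |2 - min a 1 - min b 1| ≤ 2 := by rw [abs_le]; constructor <;> linarith
  calc |min a 1 - min b 1| * |2 - min a 1 - min b 1| ≤ |a - b| * 2 :=
        mul_le_mul h1 h4 (abs_nonneg _) (abs_nonneg _)
    _ = 2 * |a - b| := by ring

lemma ftilde_eq (r : ℝ) : ftilde r = (1/4) * (min r 1)^2 * (2 - min r 1)^2 := by
  unfold ftilde
  by_cases h : r ≤ 1
  · rw [if_pos h, min_eq_left h]
  · rw [if_neg h, min_eq_right (le_of_not_ge h)]; norm_num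

lemma hfun_eq {s : ℝ} (hs : 0 ≤ s) : Real.sqrt (2 * ftilde s) = fpl s / Real.sqrt 2 := by
  have h : 2 * ftilde s = (fpl s / Real.sqrt 2)^2 := by
    rw [ftilde_eq, div_pow, Real.sq_sqrt (by norm_num : (0:ℝ) ≤ 2)]
    unfold fpl; ring
  rw [h, Real.sqrt_sq (div_nonneg (fpl_nonneg hs) (Real.sqrt_nonneg 2))]

lemma hfun_cont : Continuous fun s => Real.sqrt (2 * ftilde s) := by
  have : (fun s => Real.sqrt (2 * ftilde s))
      = fun s => Real.sqrt (2 * ((1/4) * (min s 1)^2 * (2 - min s 1)^2)) := by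
    funext s; rw [ftilde_eq]
  rw [this]; fun_prop

lemma hfun_le {s : ℝ} (hs : 0 ≤ s) : Real.sqrt (2 * ftilde s) ≤ 1 / Real.sqrt 2 := by
  rw [hfun_eq hs]
  have h2 : (0:ℝ) < Real.sqrt 2 := Real.sqrt_pos.mpr (by norm_num)
  gcongr
  exact fpl_le_one s

lemma hfun_intble (a b : ℝ) : IntervalIntegrable (fun s => Real.sqrt (2 * ftilde s)) volume a b :=
  hfun_cont.intervalIntegrable a b

lemma gfun_sub (a b : ℝ) : gfun b - gfun a = ∫ s in a..b, Real.sqrt (2 * ftilde s) := by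
  have h := intervalIntegral.integral_add_adjacent_intervals (hfun_intble 0 a) (hfun_intble a b)
  unfold gfun; linarith

lemma gfun_mono : Monotone gfun := by
  intro a b hab
  have h : 0 ≤ gfun b - gfun a := by
    rw [gfun_sub]
    exact intervalIntegral.integral_nonneg hab (fun s _ => Real.sqrt_nonneg _)
  linarith

lemma gfun_diff_le {a b C : ℝ} (hab : a ≤ b)
    (hC : ∀ s, a ≤ s → s ≤ b → Real.sqrt (2 * ftilde s) ≤ C) :
    gfun b - gfun a ≤ C * (b - a) := by
  rw [gfun_sub]
  calc (∫ s in a..b, Real.sqrt (2 * ftilde s)) ≤ ∫ _ in a..b, C := by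
        apply intervalIntegral.integral_mono_on hab (hfun_intble a b)
          intervalIntegrable_const
        intro s hs; exact hC s hs.1 hs.2
    _ = C * (b - a) := by rw [intervalIntegral.integral_const]; ring_nf
  
lemma gfun_diff_le_fpl {a b : ℝ} (ha : 0 ≤ a) (hab : a ≤ b) :
    gfun b - gfun a ≤ (fpl b / Real.sqrt 2) * (b - a) := by
  apply gfun_diff_le hab
  intro s hs1 hs2
  rw [hfun_eq (le_trans ha hs1)]
  have h2 : (0:ℝ) < Real.sqrt 2 := Real.sqrt_pos.mpr (by norm_num)
  gcongr
  exact fpl_mono hs2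

lemma gfun_one_diff {a : ℝ} (ha : 0 ≤ a) (hab : a ≤ 1) :
    gfun 1 - gfun a ≤ (1 / Real.sqrt 2) * (1 - a) := by
  apply gfun_diff_le hab
  intro s hs1 _
  exact hfun_le (le_trans ha hs1)

section MatrixNorm
variable {n : ℕ}

lemma fro_sq (M : Matrix (Fin n) (Fin n) ℝ) : ‖M‖^2 = ∑ i, ∑ j, (M i j)^2 := by
  have h1 : ‖M‖ = Real.sqrt (∑ i, ∑ j, (M i j)^2) := by
    rw [Matrix.frobenius_norm_def, Real.sqrt_eq_rpow]; norm_num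
  rw [h1, Real.sq_sqrt (by positivity)]

lemma fro_sq_trace (M : Matrix (Fin n) (Fin n) ℝ) : ‖M‖^2 = Matrix.trace (M * Mᵀ) := by
  rw [fro_sq, Matrix.trace]
  congr 1; funext i
  rw [Matrix.diag_apply, Matrix.mul_apply]
  congr 1; funext j; rw [Matrix.transpose_apply, sq]

lemma fro_orth_left {P : Matrix (Fin n) (Fin n) ℝ} (hP : P * Pᵀ = 1)
    (M : Matrix (Fin n) (Fin n) ℝ) : ‖P * M‖ = ‖M‖ := by
  have hP' : Pᵀ * P = 1 := mul_eq_one_comm.mp hP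
  have h : ‖P * M‖^2 = ‖M‖^2 := by
    rw [fro_sq_trace, fro_sq_trace, Matrix.transpose_mul, Matrix.trace_mul_comm]
    calc Matrix.trace (Mᵀ * Pᵀ * (P * M)) = Matrix.trace (Mᵀ * (Pᵀ * P) * M) := by
          rw [Matrix.mul_assoc, Matrix.mul_assoc, Matrix.mul_assoc]
      _ = Matrix.trace (M * Mᵀ) := by rw [hP', Matrix.mul_one, Matrix.trace_mul_comm]
  rw [← Real.sqrt_sq (norm_nonneg (P * M)), h, Real.sqrt_sq (norm_nonneg M)]

lemma fro_orth_right {P : Matrix (Fin n) (Fin n) ℝ} (hP : P * Pᵀ = 1)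
    (M : Matrix (Fin n) (Fin n) ℝ) : ‖M * P‖ = ‖M‖ := by
  have h : ‖M * P‖^2 = ‖M‖^2 := by
    rw [fro_sq_trace, fro_sq_trace, Matrix.transpose_mul]
    calc Matrix.trace (M * P * (Pᵀ * Mᵀ)) = Matrix.trace (M * (P * Pᵀ) * Mᵀ) := by
          rw [Matrix.mul_assoc, Matrix.mul_assoc, Matrix.mul_assoc]
      _ = Matrix.trace (M * Mᵀ) := by rw [hP, Matrix.mul_one]
  rw [← Real.sqrt_sq (norm_nonneg (M * P)), h, Real.sqrt_sq (norm_nonneg M)]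

lemma fro_diagonal (d : Fin n → ℝ) : ‖(Matrix.diagonal d)‖^2 = ∑ i, (d i)^2 := by
  rw [fro_sq]
  have : ∀ i, ∑ j, ((Matrix.diagonal d) i j)^2 = (d i)^2 := by
    intro i
    rw [Finset.sum_eq_single i]
    · rw [Matrix.diagonal_apply_eq]
    · intro j _ hj; rw [Matrix.diagonal_apply_ne' d hj]; ring
    · intro h; exact absurd (Finset.mem_univ i) h
  simp_rw [this]

lemma mulVec_sq_le (M : Matrix (Fin n) (Fin n) ℝ) (v : Fin n → ℝ) :
    ∑ i, (M.mulVec v i)^2 ≤ ‖M‖^2 * ∑ j, (v j)^2 := by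
  rw [fro_sq, Finset.sum_mul]
  apply Finset.sum_le_sum
  intro i _
  rw [Matrix.mulVec, dotProduct]
  exact Finset.sum_mul_sq_le_sq_mul_sq _ _ _

end MatrixNorm

section Rho
variable {n : ℕ}

lemma orth_dist_ge {Q R : Matrix (Fin n) (Fin n) ℝ} (hQ : Q * Qᵀ = 1) (hR : R * Rᵀ = 1)
    (hdet : Q.det * R.det = -1) : 2 ≤ ‖Q - R‖ := by
  set S := Qᵀ * R with hS
  have hQ' : Qᵀ * Q = 1 := mul_eq_one_comm.mp hQ
  have hSS : S * Sᵀ = 1 := by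
    rw [hS, Matrix.transpose_mul, Matrix.transpose_transpose]
    calc Qᵀ * R * (Rᵀ * Q) = Qᵀ * (R * Rᵀ) * Q := by
          rw [Matrix.mul_assoc, Matrix.mul_assoc, Matrix.mul_assoc]
      _ = 1 := by rw [hR, Matrix.mul_one, hQ']
  have hdetS : S.det = -1 := by
    rw [hS, Matrix.det_mul, Matrix.det_transpose, hdet]
  -- det (1 + S) = 0
  have hdet10 : (1 + S).det = 0 := by
    have h1 : Sᵀ * (1 + S) = (1 + S)ᵀ := by
      rw [Matrix.mul_add, Matrix.mul_one, mul_eq_one_comm.mp hSS,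
        Matrix.transpose_add, Matrix.transpose_one, add_comm]
    have h2 : Sᵀ.det * (1 + S).det = (1 + S).det := by
      rw [← Matrix.det_mul, h1, Matrix.det_transpose]
    rw [Matrix.det_transpose, hdetS] at h2
    linarith
  obtain ⟨v, hv0, hv⟩ := (Matrix.exists_mulVec_eq_zero_iff).mpr hdet10
  -- (1 - S) v = 2 v
  have h2v : (1 - S).mulVec v = (2 : ℝ) • v := by
    have h1 : (1 + S).mulVec v = 0 := hv
    rw [Matrix.add_mulVec, Matrix.one_mulVec] at h1
    rw [Matrix.sub_mulVec, Matrix.one_mulVec]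
    funext i
    have := congrFun h1 i
    simp only [Pi.add_apply, Pi.zero_apply] at this
    simp only [Pi.sub_apply, Pi.smul_apply, smul_eq_mul]
    linarith
  have hvpos : 0 < ∑ j, (v j)^2 := by
    rcases Function.ne_iff.mp hv0 with ⟨j, hj⟩
    apply Finset.sum_pos' (fun i _ => sq_nonneg _)
    exact ⟨j, Finset.mem_univ j, lt_of_le_of_ne (sq_nonneg _) (Ne.symm (pow_ne_zero 2 hj))⟩
  have hineq := mulVec_sq_le (1 - S) v
  rw [h2v] at hineq
  have h4 : ∑ i, ((2:ℝ) • v) i ^2 = 4 * ∑ j, (v j)^2 := by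
    rw [Finset.mul_sum]; congr 1; funext i
    simp [smul_eq_mul]; ring
  rw [h4] at hineq
  have hnorm_sq : 4 ≤ ‖(1 - S : Matrix (Fin n) (Fin n) ℝ)‖^2 := by
    by_contra hcon
    push_neg at hcon
    nlinarith
  have heq : ‖Q - R‖ = ‖(1 - S : Matrix (Fin n) (Fin n) ℝ)‖ := by
    have : Q - R = Q * (1 - S) := by
      rw [Matrix.mul_sub, Matrix.mul_one, hS, ← Matrix.mul_assoc, hQ, Matrix.one_mul]
    rw [this, fro_orth_left hQ]
  rw [heq]
  nlinarith [norm_nonneg (1 - S : Matrix (Fin n) (Fin n) ℝ)]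

lemma rhoPlus_nonneg (A : Matrix (Fin n) (Fin n) ℝ) : 0 ≤ rhoPlus A := Metric.infDist_nonneg
lemma rhoMinus_nonneg (A : Matrix (Fin n) (Fin n) ℝ) : 0 ≤ rhoMinus A := Metric.infDist_nonneg

lemma rhoPlus_lip (A B : Matrix (Fin n) (Fin n) ℝ) : |rhoPlus A - rhoPlus B| ≤ ‖A - B‖ := by
  have h := (Metric.lipschitz_infDist_pt
    {Q : Matrix (Fin n) (Fin n) ℝ | Q * Qᵀ = 1 ∧ Q.det = 1}).dist_le_mul A B
  rw [Real.dist_eq] at h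
  simpa [rhoPlus, dist_eq_norm] using h

lemma rhoMinus_lip (A B : Matrix (Fin n) (Fin n) ℝ) : |rhoMinus A - rhoMinus B| ≤ ‖A - B‖ := by
  have h := (Metric.lipschitz_infDist_pt
    {Q : Matrix (Fin n) (Fin n) ℝ | Q * Qᵀ = 1 ∧ Q.det = -1}).dist_le_mul A B
  rw [Real.dist_eq] at h
  simpa [rhoMinus, dist_eq_norm] using h

lemma rho_add (hn : 1 ≤ n) (A : Matrix (Fin n) (Fin n) ℝ) : 2 ≤ rhoPlus A + rhoMinus A := by
  have hplus_ne : {Q : Matrix (Fin n) (Fin n) ℝ | Q * Qᵀ = 1 ∧ Q.det = 1}.Nonempty :=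
    ⟨1, by simp⟩
  have hminus_ne : {Q : Matrix (Fin n) (Fin n) ℝ | Q * Qᵀ = 1 ∧ Q.det = -1}.Nonempty := by
    refine ⟨Matrix.diagonal (fun i => if i = ⟨0, hn⟩ then (-1:ℝ) else 1), ?_, ?_⟩
    · ext i j
      rw [Matrix.diagonal_transpose, Matrix.diagonal_mul_diagonal]
      by_cases h : i = j
      · subst h
        rw [Matrix.diagonal_apply_eq, Matrix.one_apply_eq]
        by_cases h2 : i = ⟨0, hn⟩ <;> simp [h2]
      · rw [Matrix.diagonal_apply_ne _ h, Matrix.one_apply_ne h]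
    · rw [Matrix.det_diagonal,
        Finset.prod_ite_eq' Finset.univ (⟨0, hn⟩ : Fin n) (fun _ => (-1:ℝ))]
      simp
  apply le_of_forall_pos_le_add
  intro δ hδ
  have h1 : rhoPlus A < rhoPlus A + δ/2 := by linarith
  have h2 : rhoMinus A < rhoMinus A + δ/2 := by linarith
  obtain ⟨Q, hQmem, hQd⟩ := (Metric.infDist_lt_iff hplus_ne).mp h1
  obtain ⟨R, hRmem, hRd⟩ := (Metric.infDist_lt_iff hminus_ne).mp h2
  have hQR : 2 ≤ ‖Q - R‖ := orth_dist_ge hQmem.1 hRmem.1 (by rw [hQmem.2, hRmem.2]; ring)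
  have htri : ‖Q - R‖ ≤ dist A Q + dist A R := by
    rw [dist_eq_norm, dist_eq_norm]
    calc ‖Q - R‖ = ‖-(A - Q) + (A - R)‖ := by congr 1; abel
      _ ≤ ‖-(A - Q)‖ + ‖A - R‖ := norm_add_le _ _
      _ = ‖A - Q‖ + ‖A - R‖ := by rw [norm_neg]
  rw [dist_eq_norm] at hQd hRd
  rw [dist_eq_norm, dist_eq_norm] at htri
  linarith

end Rho

section Key
variable {n : ℕ}

lemma sum_key (lam : Fin n → ℝ) (hlam : ∀ i, 0 ≤ lam i) :
    fpl (Real.sqrt (∑ i, (Real.sqrt (lam i) - 1)^2))^2 ≤ ∑ i, (lam i - 1)^2 := by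
  set x := ∑ i, (Real.sqrt (lam i) - 1)^2 with hxdef
  have hx0 : 0 ≤ x := Finset.sum_nonneg (fun i _ => sq_nonneg _)
  have hterm1 : ∀ i, (Real.sqrt (lam i) - 1)^2 ≤ (lam i - 1)^2 := by
    intro i
    have hs := Real.sqrt_nonneg (lam i)
    have hsq := Real.sq_sqrt (hlam i)
    nlinarith [sq_nonneg (Real.sqrt (lam i) - 1), sq_nonneg (Real.sqrt (lam i) + 1)]
  by_cases hx1 : x ≤ 1
  · have ht1 : Real.sqrt x ≤ 1 := by
      rw [show (1:ℝ) = Real.sqrt 1 by rw [Real.sqrt_one]]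
      exact Real.sqrt_le_sqrt hx1
    have ht0 : 0 ≤ Real.sqrt x := Real.sqrt_nonneg x
    have htsq : Real.sqrt x ^ 2 = x := Real.sq_sqrt hx0
    have hfpl : fpl (Real.sqrt x) = Real.sqrt x * (2 - Real.sqrt x) := by
      rw [fpl, min_eq_left ht1]
    have hterm : ∀ i, (Real.sqrt (lam i) - 1)^2 * (2 - Real.sqrt x)^2 ≤ (lam i - 1)^2 := by
      intro i
      have hs := Real.sqrt_nonneg (lam i)
      have hsq := Real.sq_sqrt (hlam i)
      have hle : (Real.sqrt (lam i) - 1)^2 ≤ Real.sqrt x ^ 2 := by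
        rw [htsq]
        exact Finset.single_le_sum (f := fun i => (Real.sqrt (lam i) - 1)^2)
          (fun i _ => sq_nonneg _) (Finset.mem_univ i)
      have hst : 1 - Real.sqrt (lam i) ≤ Real.sqrt x := by nlinarith
      have p2 : 0 ≤ Real.sqrt (lam i) - 1 + Real.sqrt x := by linarith
      have p3 : 0 ≤ Real.sqrt (lam i) + 3 - Real.sqrt x := by linarith
      nlinarith [mul_nonneg (mul_nonneg (sq_nonneg (Real.sqrt (lam i) - 1)) p2) p3]
    calc fpl (Real.sqrt x)^2 = x * (2 - Real.sqrt x)^2 := by rw [hfpl]; nlinarith [htsq]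
      _ = ∑ i, (Real.sqrt (lam i) - 1)^2 * (2 - Real.sqrt x)^2 := by
          rw [hxdef, Finset.sum_mul]
      _ ≤ ∑ i, (lam i - 1)^2 := Finset.sum_le_sum (fun i _ => hterm i)
  · push_neg at hx1
    have ht1 : 1 ≤ Real.sqrt x := by
      rw [show (1:ℝ) = Real.sqrt 1 by rw [Real.sqrt_one]]
      exact Real.sqrt_le_sqrt hx1.le
    have hfpl : fpl (Real.sqrt x) = 1 := by rw [fpl, min_eq_right ht1]; ring
    rw [hfpl]
    calc (1:ℝ)^2 = 1 := one_pow 2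
      _ ≤ x := hx1.le
      _ ≤ ∑ i, (lam i - 1)^2 := Finset.sum_le_sum (fun i _ => hterm1 i)

end Key

section KeyInv
variable {n : ℕ}

lemma conjT_eq_T (M : Matrix (Fin n) (Fin n) ℝ) : Mᴴ = Mᵀ := by
  ext i j; simp [Matrix.conjTranspose_apply]

lemma aux_inv1 {t : ℝ} (ht : t ≠ 0) : t⁻¹ * (t^2 * t⁻¹) = 1 := by
  field_simp

lemma aux_inv2 {t : ℝ} (ht : t ≠ 0) : (1 - t⁻¹) * t^2 * (1 - t⁻¹) = (t - 1)^2 := by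
  field_simp

lemma key_inv {A : Matrix (Fin n) (Fin n) ℝ} (hdet : A.det ≠ 0) :
    fpl (min (rhoPlus A) (rhoMinus A)) ≤ ‖A * Aᵀ - 1‖ := by
  classical
  have hS : (A * Aᵀ).IsHermitian := by
    have h := Matrix.isHermitian_mul_conjTranspose_self A
    rwa [conjT_eq_T] at h
  set P : Matrix (Fin n) (Fin n) ℝ := (hS.eigenvectorUnitary : Matrix (Fin n) (Fin n) ℝ)
    with hPdef
  set lam : Fin n → ℝ := hS.eigenvalues with hlamdef
  have hstarP : star P = Pᵀ := by rw [Matrix.star_eq_conjTranspose, conjT_eq_T]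
  have hPtP : Pᵀ * P = 1 := by
    rw [← hstarP]
    exact Unitary.coe_star_mul_self hS.eigenvectorUnitary
  have hPPt : P * Pᵀ = 1 := by
    rw [← hstarP]
    exact Unitary.coe_mul_star_self hS.eigenvectorUnitary
  have hMid : Pᵀ * (A * Aᵀ) * P = Matrix.diagonal lam := by
    have h := hS.conjStarAlgAut_star_eigenvectorUnitary
    simp only [Unitary.conjStarAlgAut_star_apply, Unitary.coe_star, hstarP] at h
    have h2 : (RCLike.ofReal ∘ hS.eigenvalues : Fin n → ℝ) = hS.eigenvalues := by
      funext i; simp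
    rw [h2] at h
    exact h
  have hlam0 : ∀ i, 0 ≤ lam i := by
    intro i
    have h := Matrix.posSemidef_self_mul_conjTranspose A
    rw [conjT_eq_T] at h
    exact h.eigenvalues_nonneg i
  have hlampos : ∀ i, 0 < lam i := by
    have hdetprod : (A * Aᵀ).det = ∏ i, lam i := by
      have h := hS.det_eq_prod_eigenvalues
      simpa using h
    have hdet2 : (A * Aᵀ).det ≠ 0 := by
      rw [Matrix.det_mul, Matrix.det_transpose]
      exact mul_ne_zero hdet hdet
    rw [hdetprod] at hdet2
    intro i
    rcases (hlam0 i).lt_or_eq with h | h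
    · exact h
    · exact absurd (Finset.prod_eq_zero (Finset.mem_univ i) h.symm) hdet2
  have hspos : ∀ i, 0 < Real.sqrt (lam i) := fun i => Real.sqrt_pos.mpr (hlampos i)
  have hssq : ∀ i, Real.sqrt (lam i) ^ 2 = lam i := fun i => Real.sq_sqrt (hlam0 i)
  have hAAt : A * Aᵀ = P * Matrix.diagonal lam * Pᵀ := by
    calc A * Aᵀ = (P * Pᵀ) * (A * Aᵀ) * (P * Pᵀ) := by
          rw [hPPt, Matrix.one_mul, Matrix.mul_one]
      _ = P * (Pᵀ * (A * Aᵀ) * P) * Pᵀ := by simp only [Matrix.mul_assoc]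
      _ = P * Matrix.diagonal lam * Pᵀ := by rw [hMid]
  set dinv : Matrix (Fin n) (Fin n) ℝ := Matrix.diagonal (fun i => (Real.sqrt (lam i))⁻¹)
    with hdinvdef
  set Q : Matrix (Fin n) (Fin n) ℝ := P * dinv * Pᵀ * A with hQdef
  have hPtPX : ∀ X : Matrix (Fin n) (Fin n) ℝ, Pᵀ * (P * X) = X := by
    intro X; rw [← Matrix.mul_assoc, hPtP, Matrix.one_mul]
  have hddd : dinv * (Matrix.diagonal lam * dinv) = 1 := by
    rw [hdinvdef, Matrix.diagonal_mul_diagonal, Matrix.diagonal_mul_diagonal,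
      ← Matrix.diagonal_one]
    refine congrArg Matrix.diagonal (funext fun i => ?_)
    have h := aux_inv1 (hspos i).ne'
    rw [hssq i] at h
    exact h
  have hQQt : Q * Qᵀ = 1 := by
    have hQt : Qᵀ = Aᵀ * (P * (dinv * Pᵀ)) := by
      rw [hQdef]
      simp only [Matrix.transpose_mul, Matrix.transpose_transpose, hdinvdef,
        Matrix.diagonal_transpose, Matrix.mul_assoc]
    rw [hQdef, hQt]
    calc P * dinv * Pᵀ * A * (Aᵀ * (P * (dinv * Pᵀ)))
        = P * (dinv * (Pᵀ * (A * (Aᵀ * (P * (dinv * Pᵀ)))))) := by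
          simp only [Matrix.mul_assoc]
      _ = P * (dinv * (Pᵀ * (P * (Matrix.diagonal lam * (Pᵀ * (P * (dinv * Pᵀ))))))) := by
          conv_lhs => rw [show A * (Aᵀ * (P * (dinv * Pᵀ)))
            = (A * Aᵀ) * (P * (dinv * Pᵀ)) by simp only [Matrix.mul_assoc], hAAt]
          simp only [Matrix.mul_assoc]
      _ = P * (dinv * (Matrix.diagonal lam * (dinv * Pᵀ))) := by
          rw [hPtPX, hPtPX]
      _ = P * ((dinv * (Matrix.diagonal lam * dinv)) * Pᵀ) := by
          simp only [Matrix.mul_assoc]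
      _ = 1 := by rw [hddd, Matrix.one_mul, hPPt]
  set c2 : Fin n → ℝ := fun i => 1 - (Real.sqrt (lam i))⁻¹ with hc2def
  set M : Matrix (Fin n) (Fin n) ℝ := Matrix.diagonal c2 * (Pᵀ * A) with hMdef
  have hAQ : A - Q = P * M := by
    rw [hMdef, hc2def]
    have hdc2 : Matrix.diagonal (fun i => 1 - (Real.sqrt (lam i))⁻¹) = 1 - dinv := by
      rw [hdinvdef, ← Matrix.diagonal_one, ← Matrix.diagonal_sub]
    rw [hdc2, Matrix.sub_mul, Matrix.mul_sub, Matrix.one_mul, hQdef]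
    rw [← Matrix.mul_assoc, ← Matrix.mul_assoc, hPPt, Matrix.one_mul]
    rw [Matrix.mul_assoc (P * dinv) Pᵀ A]
  have hMMt : M * Mᵀ = Matrix.diagonal (fun i => c2 i * lam i * c2 i) := by
    have hMt : Mᵀ = Aᵀ * P * Matrix.diagonal c2 := by
      rw [hMdef]
      simp only [Matrix.transpose_mul, Matrix.transpose_transpose, Matrix.diagonal_transpose,
        Matrix.mul_assoc]
    rw [hMdef, hMt]
    calc Matrix.diagonal c2 * (Pᵀ * A) * (Aᵀ * P * Matrix.diagonal c2)
        = Matrix.diagonal c2 * ((Pᵀ * (A * Aᵀ) * P) * Matrix.diagonal c2) := by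
          simp only [Matrix.mul_assoc]
      _ = Matrix.diagonal c2 * (Matrix.diagonal lam * Matrix.diagonal c2) := by rw [hMid]
      _ = Matrix.diagonal (fun i => c2 i * lam i * c2 i) := by
          rw [Matrix.diagonal_mul_diagonal, Matrix.diagonal_mul_diagonal]
          exact congrArg Matrix.diagonal (funext fun i => by ring)
  have hAQnorm : ‖A - Q‖ = Real.sqrt (∑ i, (Real.sqrt (lam i) - 1)^2) := by
    have h1 : ‖A - Q‖^2 = ∑ i, (Real.sqrt (lam i) - 1)^2 := by
      rw [hAQ, fro_orth_left hPPt, fro_sq_trace, hMMt, Matrix.trace_diagonal]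
      congr 1; funext i
      have h := hssq i
      have h2 := (hspos i).ne'
      rw [hc2def]
      field_simp
      nlinarith [hssq i]
    rw [← Real.sqrt_sq (norm_nonneg (A - Q)), h1]
  have hNnorm : ‖A * Aᵀ - 1‖^2 = ∑ i, (lam i - 1)^2 := by
    have h1 : A * Aᵀ - 1 = P * Matrix.diagonal (fun i => lam i - 1) * Pᵀ := by
      have hd : Matrix.diagonal (fun i => lam i - 1) = Matrix.diagonal lam - 1 := by
        rw [← Matrix.diagonal_one, ← Matrix.diagonal_sub]
      rw [hd, Matrix.mul_sub, Matrix.mul_one, Matrix.sub_mul, ← hAAt, hPPt]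
    have hPt_orth : Pᵀ * Pᵀᵀ = 1 := by rw [Matrix.transpose_transpose, hPtP]
    rw [h1, fro_orth_right hPt_orth, fro_orth_left hPPt, fro_diagonal]
  have hdetQ : Q.det = 1 ∨ Q.det = -1 := by
    have h := congrArg Matrix.det hQQt
    rw [Matrix.det_mul, Matrix.det_transpose, Matrix.det_one] at h
    exact mul_self_eq_one_iff.mp h
  have hrho : min (rhoPlus A) (rhoMinus A) ≤ ‖A - Q‖ := by
    rcases hdetQ with h | h
    · refine le_trans (min_le_left _ _) ?_
      rw [← dist_eq_norm]
      exact Metric.infDist_le_dist_of_mem ⟨hQQt, h⟩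
    · refine le_trans (min_le_right _ _) ?_
      rw [← dist_eq_norm]
      exact Metric.infDist_le_dist_of_mem ⟨hQQt, h⟩
  have hsum := sum_key lam hlam0
  have hfin : fpl ‖A - Q‖ ≤ ‖A * Aᵀ - 1‖ := by
    have h0 : 0 ≤ fpl ‖A - Q‖ := fpl_nonneg (norm_nonneg _)
    have h2 : fpl ‖A - Q‖^2 ≤ ‖A * Aᵀ - 1‖^2 := by
      rw [hAQnorm, hNnorm]
      exact hsum
    nlinarith [norm_nonneg (A * Aᵀ - 1)]
  exact le_trans (fpl_mono hrho) hfin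

end KeyInv

section KeyLimit
variable {n : ℕ}

lemma exists_perturb (A : Matrix (Fin n) (Fin n) ℝ) {δ : ℝ} (hδ : 0 < δ) :
    ∃ t : ℝ, 0 < t ∧ t < δ ∧ (A - t • 1).det ≠ 0 := by
  classical
  have hp0 : A.charpoly ≠ 0 := A.charpoly_monic.ne_zero
  have hfin := Polynomial.finite_setOf_isRoot hp0
  have hinf : (Set.Ioo (0:ℝ) δ).Infinite := Set.Ioo_infinite hδ
  obtain ⟨t, ht⟩ := (hinf.diff hfin).nonempty
  obtain ⟨⟨ht1, ht2⟩, htroot⟩ := ht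
  refine ⟨t, ht1, ht2, ?_⟩
  have heval : A.charpoly.eval t = (t • (1 : Matrix (Fin n) (Fin n) ℝ) - A).det := by
    rw [Matrix.charpoly]
    rw [show Polynomial.eval t (Matrix.charmatrix A).det
        = (Polynomial.evalRingHom t) (Matrix.charmatrix A).det from rfl]
    rw [RingHom.map_det]
    congr 1
    ext i j
    by_cases h : i = j
    · subst h
      simp [Matrix.charmatrix_apply_eq, Matrix.smul_apply, Matrix.one_apply_eq]
    · simp [Matrix.charmatrix_apply_ne _ _ _ h, Matrix.smul_apply, Matrix.one_apply_ne h]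
  have hne : A.charpoly.eval t ≠ 0 := by
    intro hcon
    exact htroot hcon
  rw [heval] at hne
  have hAsub : A - t • 1 = -(t • (1 : Matrix (Fin n) (Fin n) ℝ) - A) := by abel
  rw [hAsub, Matrix.det_neg]
  intro hcon
  rcases mul_eq_zero.mp hcon with h | h
  · exact pow_ne_zero _ (by norm_num : (-1 : ℝ) ≠ 0) h
  · exact hne h

lemma key (A : Matrix (Fin n) (Fin n) ℝ) :
    fpl (min (rhoPlus A) (rhoMinus A)) ≤ ‖A * Aᵀ - 1‖ := by
  have hex : ∀ k : ℕ, ∃ t : ℝ, 0 < t ∧ t < 1/(k+1) ∧ (A - t • 1).det ≠ 0 :=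
    fun k => exists_perturb A (by positivity)
  choose u hu1 hu2 hu3 using hex
  have htend : Filter.Tendsto u Filter.atTop (nhds 0) := by
    apply tendsto_of_tendsto_of_tendsto_of_le_of_le tendsto_const_nhds
      tendsto_one_div_add_atTop_nhds_zero_nat
    · exact fun k => (hu1 k).le
    · exact fun k => (hu2 k).le
  have hAk : Filter.Tendsto (fun k => A - u k • (1 : Matrix (Fin n) (Fin n) ℝ))
      Filter.atTop (nhds A) := by
    have hc : Continuous (fun t : ℝ => A - t • (1 : Matrix (Fin n) (Fin n) ℝ)) :=
      continuous_const.sub (continuous_id.smul continuous_const)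
    have := (hc.tendsto 0).comp htend
    simpa [Function.comp_def] using this
  have hcont1 : Continuous (fun B : Matrix (Fin n) (Fin n) ℝ =>
      fpl (min (rhoPlus B) (rhoMinus B))) := by
    have hf : Continuous fpl := by
      unfold fpl; fun_prop
    have h1 : Continuous (fun B : Matrix (Fin n) (Fin n) ℝ => rhoPlus B) :=
      Metric.continuous_infDist_pt _
    have h2 : Continuous (fun B : Matrix (Fin n) (Fin n) ℝ => rhoMinus B) :=
      Metric.continuous_infDist_pt _
    exact hf.comp (h1.min h2)
  have hcont2 : Continuous (fun B : Matrix (Fin n) (Fin n) ℝ => ‖B * Bᵀ - 1‖) := by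
    have : Continuous (fun B : Matrix (Fin n) (Fin n) ℝ => B * Bᵀ) :=
      Continuous.matrix_mul continuous_id (Continuous.matrix_transpose continuous_id)
    exact (this.sub continuous_const).norm
  exact le_of_tendsto_of_tendsto' ((hcont1.tendsto A).comp hAk) ((hcont2.tendsto A).comp hAk)
    (fun k => key_inv (hu3 k))

end KeyLimit

section DFLip
variable {n : ℕ}

lemma sqrt2_pos : (0:ℝ) < Real.sqrt 2 := Real.sqrt_pos.mpr (by norm_num)
lemma one_le_sqrt2 : (1:ℝ) ≤ Real.sqrt 2 := by
  rw [show (1:ℝ) = Real.sqrt 1 by rw [Real.sqrt_one]]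
  exact Real.sqrt_le_sqrt (by norm_num)

lemma gfun_abs_est {r1 r2 co d : ℝ} (h1 : 0 ≤ r1) (h2 : 0 ≤ r2) (h11 : r1 ≤ 1) (h21 : r2 ≤ 1)
    (hco1 : fpl r1 / Real.sqrt 2 ≤ co) (hco2 : fpl r2 / Real.sqrt 2 ≤ co)
    (hd : |r1 - r2| ≤ d) : |gfun r1 - gfun r2| ≤ co * d := by
  have hco0 : 0 ≤ co :=
    le_trans (div_nonneg (fpl_nonneg h1) (Real.sqrt_nonneg 2)) hco1
  rcases le_total r1 r2 with h | h
  · have hg : gfun r1 ≤ gfun r2 := gfun_mono h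
    rw [abs_of_nonpos (by linarith)]
    have hest := gfun_diff_le_fpl h1 h
    have hd' : r2 - r1 ≤ d := by
      have := abs_le.mp hd; linarith [this.1]
    calc -(gfun r1 - gfun r2) = gfun r2 - gfun r1 := by ring
      _ ≤ (fpl r2 / Real.sqrt 2) * (r2 - r1) := hest
      _ ≤ co * d := mul_le_mul hco2 hd' (by linarith) hco0
  · have hg : gfun r2 ≤ gfun r1 := gfun_mono h
    rw [abs_of_nonneg (by linarith)]
    have hest := gfun_diff_le_fpl h2 h
    have hd' : r1 - r2 ≤ d := by
      have := abs_le.mp hd; linarith [this.2]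
    calc gfun r1 - gfun r2 ≤ (fpl r1 / Real.sqrt 2) * (r1 - r2) := hest
      _ ≤ co * d := mul_le_mul hco1 hd' (by linarith) hco0
  
lemma K_ge {rhoA R d r : ℝ} (hr : 1 - d ≤ r) (hd : d ≤ 2*R) (hrho : r - R ≤ rhoA)
    (hrho0 : 0 ≤ rhoA) (hR : 0 ≤ R) :
    1/Real.sqrt 2 ≤ fpl rhoA / Real.sqrt 2 + 6*R := by
  have hf : 1 - 6*R ≤ fpl rhoA := by
    rcases le_or_gt (1 - 3*R) 0 with hc | hc
    · have := fpl_nonneg hrho0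
      linarith
    · have hmono : fpl (1 - 3*R) ≤ fpl rhoA := fpl_mono (by linarith)
      have hlip := fpl_lip (by linarith : (0:ℝ) ≤ 1 - 3*R) (by norm_num : (0:ℝ) ≤ 1)
      rw [fpl_one] at hlip
      have habs : |(1 : ℝ) - 3*R - 1| = 3*R := by rw [show (1:ℝ) - 3*R - 1 = -(3*R) by ring, abs_neg, abs_of_nonneg (by linarith)]
      rw [habs] at hlip
      have := abs_le.mp hlip
      linarith [this.1]
  have hs0 := sqrt2_pos
  have hs1 := one_le_sqrt2
  have h1 : (1 - 6*R)/Real.sqrt 2 ≤ fpl rhoA / Real.sqrt 2 :=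
    (div_le_div_iff_of_pos_right hs0).mpr hf
  have h2 : (6*R)/Real.sqrt 2 ≤ 6*R := div_le_self (by linarith) hs1
  have h3 : (1 - 6*R)/Real.sqrt 2 = 1/Real.sqrt 2 - (6*R)/Real.sqrt 2 := by ring
  linarith

lemma cross_est {r d K : ℝ} (hr0 : 0 ≤ r) (hr1 : r ≤ 1) (hrd : 1 - r ≤ d)
    (hK : 1/Real.sqrt 2 ≤ K) (hd0 : 0 ≤ d) :
    gfun 1 - gfun r ≤ K * d := by
  have h1 : (0:ℝ) ≤ 1/Real.sqrt 2 := by positivity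
  calc gfun 1 - gfun r ≤ (1/Real.sqrt 2) * (1-r) := gfun_one_diff hr0 hr1
    _ ≤ (1/Real.sqrt 2) * d := mul_le_mul_of_nonneg_left hrd h1
    _ ≤ K * d := mul_le_mul_of_nonneg_right hK hd0

lemma cross2_est {r s d K : ℝ} (hr0 : 0 ≤ r) (hr1 : r ≤ 1) (hs0 : 0 ≤ s) (hs1 : s ≤ 1)
    (hsum : (1-r) + (1-s) ≤ d) (hK : 1/Real.sqrt 2 ≤ K) (hd0 : 0 ≤ d) :
    (gfun 1 - gfun r) + (gfun 1 - gfun s) ≤ K * d := by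
  have h1 : (0:ℝ) ≤ 1/Real.sqrt 2 := by positivity
  have e1 := gfun_one_diff hr0 hr1
  have e2 := gfun_one_diff hs0 hs1
  calc (gfun 1 - gfun r) + (gfun 1 - gfun s) ≤ (1/Real.sqrt 2) * ((1-r) + (1-s)) := by
        rw [mul_add]; exact add_le_add e1 e2
    _ ≤ (1/Real.sqrt 2) * d := mul_le_mul_of_nonneg_left hsum h1
    _ ≤ K * d := mul_le_mul_of_nonneg_right hK hd0

end DFLip

section DFLipMain
variable {n : ℕ}

lemma dF_lip_on (hn : 1 ≤ n) (A : Matrix (Fin n) (Fin n) ℝ) {R : ℝ} (hR : 0 ≤ R)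
    {B1 B2 : Matrix (Fin n) (Fin n) ℝ} (hB1 : ‖B1 - A‖ ≤ R) (hB2 : ‖B2 - A‖ ≤ R) :
    |dF B1 - dF B2| ≤
      (fpl (min (rhoPlus A) (rhoMinus A)) / Real.sqrt 2 + 6 * R) * ‖B1 - B2‖ := by
  set rhoA := min (rhoPlus A) (rhoMinus A) with hrhoA
  set K := fpl rhoA / Real.sqrt 2 + 6 * R with hK
  set d := ‖B1 - B2‖ with hd
  have hd0 : 0 ≤ d := norm_nonneg _
  have hrhoA0 : 0 ≤ rhoA := le_min (rhoPlus_nonneg A) (rhoMinus_nonneg A)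
  have hK0 : 0 ≤ K := by
    have := div_nonneg (fpl_nonneg hrhoA0) (Real.sqrt_nonneg 2)
    rw [hK]; linarith
  have hd2R : d ≤ 2*R := by
    have h : B1 - B2 = (B1 - A) - (B2 - A) := by abel
    rw [hd, h]
    calc ‖(B1 - A) - (B2 - A)‖ ≤ ‖B1 - A‖ + ‖B2 - A‖ := norm_sub_le _ _
      _ ≤ 2*R := by linarith
  -- rho facts
  have hm1 : 0 ≤ rhoMinus B1 := rhoMinus_nonneg B1
  have hm2 : 0 ≤ rhoMinus B2 := rhoMinus_nonneg B2
  have hp1 : 0 ≤ rhoPlus B1 := rhoPlus_nonneg B1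
  have hp2 : 0 ≤ rhoPlus B2 := rhoPlus_nonneg B2
  have hmlip : |rhoMinus B1 - rhoMinus B2| ≤ d := rhoMinus_lip B1 B2
  have hplip : |rhoPlus B1 - rhoPlus B2| ≤ d := rhoPlus_lip B1 B2
  have hsum1 : 2 ≤ rhoPlus B1 + rhoMinus B1 := rho_add hn B1
  have hsum2 : 2 ≤ rhoPlus B2 + rhoMinus B2 := rho_add hn B2
  have hminlip1 : |min (rhoPlus B1) (rhoMinus B1) - rhoA| ≤ R := by
    refine le_trans (abs_min_sub_min_le_max _ _ _ _) (max_le ?_ ?_)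
    · exact le_trans (rhoPlus_lip B1 A) hB1
    · exact le_trans (rhoMinus_lip B1 A) hB1
  have hminlip2 : |min (rhoPlus B2) (rhoMinus B2) - rhoA| ≤ R := by
    refine le_trans (abs_min_sub_min_le_max _ _ _ _) (max_le ?_ ?_)
    · exact le_trans (rhoPlus_lip B2 A) hB2
    · exact le_trans (rhoMinus_lip B2 A) hB2
  have hmin1nn : 0 ≤ min (rhoPlus B1) (rhoMinus B1) := le_min hp1 hm1
  have hmin2nn : 0 ≤ min (rhoPlus B2) (rhoMinus B2) := le_min hp2 hm2
  have hfpl1 : fpl (min (rhoPlus B1) (rhoMinus B1)) ≤ fpl rhoA + 2*R := by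
    have := fpl_lip hmin1nn hrhoA0
    have h2 := abs_le.mp (le_trans this (by linarith [hminlip1] :
      2 * |min (rhoPlus B1) (rhoMinus B1) - rhoA| ≤ 2*R))
    linarith [h2.2]
  have hfpl2 : fpl (min (rhoPlus B2) (rhoMinus B2)) ≤ fpl rhoA + 2*R := by
    have := fpl_lip hmin2nn hrhoA0
    have h2 := abs_le.mp (le_trans this (by linarith [hminlip2] :
      2 * |min (rhoPlus B2) (rhoMinus B2) - rhoA| ≤ 2*R))
    linarith [h2.2]
  have hrhoAge1 : rhoA ≥ min (rhoPlus B1) (rhoMinus B1) - R := by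
    have := abs_le.mp hminlip1; linarith [this.1]
  have hrhoAge2 : rhoA ≥ min (rhoPlus B2) (rhoMinus B2) - R := by
    have := abs_le.mp hminlip2; linarith [this.1]
  have hs0 := sqrt2_pos
  have hs1 := one_le_sqrt2
  -- the common coefficient bound for same-branch cases
  have hco_le : fpl rhoA / Real.sqrt 2 + 2*R ≤ K := by
    rw [hK]; linarith
  have hcoK : ∀ r : ℝ, 0 ≤ r → fpl r ≤ fpl rhoA + 2*R → fpl r / Real.sqrt 2 ≤
      fpl rhoA / Real.sqrt 2 + 2*R := by
    intro r hr hfr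
    have h1 : fpl r / Real.sqrt 2 ≤ (fpl rhoA + 2*R) / Real.sqrt 2 :=
      (div_le_div_iff_of_pos_right hs0).mpr hfr
    have h2 : (fpl rhoA + 2*R) / Real.sqrt 2 = fpl rhoA / Real.sqrt 2
        + (2*R) / Real.sqrt 2 := by ring
    have h3 : (2*R) / Real.sqrt 2 ≤ 2*R := div_le_self (by linarith) hs1
    linarith
  have habs_md : rhoMinus B2 - rhoMinus B1 ≤ d := by
    have := abs_le.mp hmlip; linarith [this.1]
  have habs_md' : rhoMinus B1 - rhoMinus B2 ≤ d := by
    have := abs_le.mp hmlip; linarith [this.2]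
  have habs_pd : rhoPlus B2 - rhoPlus B1 ≤ d := by
    have := abs_le.mp hplip; linarith [this.1]
  have habs_pd' : rhoPlus B1 - rhoPlus B2 ≤ d := by
    have := abs_le.mp hplip; linarith [this.2]
  have hcF : cF = 2 * gfun 1 := rfl
  have dF_eq1 : ∀ B : Matrix (Fin n) (Fin n) ℝ, rhoMinus B ≤ 1 → dF B = gfun (rhoMinus B) := by
    intro B h; unfold dF; rw [if_pos h]
  have dF_eq2 : ∀ B : Matrix (Fin n) (Fin n) ℝ, ¬ rhoMinus B ≤ 1 → rhoPlus B ≤ 1 →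
      dF B = cF - gfun (rhoPlus B) := by
    intro B h h'; unfold dF; rw [if_neg h, if_pos h']
  have dF_eq3 : ∀ B : Matrix (Fin n) (Fin n) ℝ, ¬ rhoMinus B ≤ 1 → ¬ rhoPlus B ≤ 1 →
      dF B = cF / 2 := by
    intro B h h'; unfold dF; rw [if_neg h, if_neg h']
  by_cases h1m : rhoMinus B1 ≤ 1
  · by_cases h2m : rhoMinus B2 ≤ 1
    · rw [dF_eq1 B1 h1m, dF_eq1 B2 h2m]
      -- case (1,1)
      have hmin1 : min (rhoPlus B1) (rhoMinus B1) = rhoMinus B1 :=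
        min_eq_right (by linarith)
      have hmin2 : min (rhoPlus B2) (rhoMinus B2) = rhoMinus B2 :=
        min_eq_right (by linarith)
      have hco1 : fpl (rhoMinus B1) / Real.sqrt 2 ≤ fpl rhoA / Real.sqrt 2 + 2*R := by
        apply hcoK _ hm1; rw [← hmin1]; exact hfpl1
      have hco2 : fpl (rhoMinus B2) / Real.sqrt 2 ≤ fpl rhoA / Real.sqrt 2 + 2*R := by
        apply hcoK _ hm2; rw [← hmin2]; exact hfpl2
      have := gfun_abs_est hm1 hm2 h1m h2m hco1 hco2 hmlip
      calc |gfun (rhoMinus B1) - gfun (rhoMinus B2)|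
          ≤ (fpl rhoA / Real.sqrt 2 + 2*R) * d := this
        _ ≤ K * d := mul_le_mul_of_nonneg_right hco_le hd0
    · by_cases h2p : rhoPlus B2 ≤ 1
      · rw [dF_eq1 B1 h1m, dF_eq2 B2 h2m h2p]
        -- case (1,2)
        push_neg at h2m
        have hKge : 1/Real.sqrt 2 ≤ K := by
          apply K_ge (r := rhoMinus B1) _ hd2R _ hrhoA0 hR
          · linarith
          · have hmin1 : min (rhoPlus B1) (rhoMinus B1) = rhoMinus B1 :=
              min_eq_right (by linarith)
            rw [hmin1] at hrhoAge1; linarith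
        have hsumle : (1 - rhoMinus B1) + (1 - rhoPlus B2) ≤ d := by linarith
        have habs : |gfun (rhoMinus B1) - (cF - gfun (rhoPlus B2))| ≤
            (gfun 1 - gfun (rhoMinus B1)) + (gfun 1 - gfun (rhoPlus B2)) := by
          rw [hcF]
          have e1 : gfun (rhoMinus B1) ≤ gfun 1 := gfun_mono h1m
          have e2 : gfun (rhoPlus B2) ≤ gfun 1 := gfun_mono h2p
          rw [abs_le]; constructor <;> [linarith; linarith]
        refine le_trans habs (cross2_est hm1 h1m hp2 h2p hsumle hKge hd0)
      · rw [dF_eq1 B1 h1m, dF_eq3 B2 h2m h2p]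
        -- case (1,3)
        push_neg at h2m h2p
        have hKge : 1/Real.sqrt 2 ≤ K := by
          apply K_ge (r := rhoMinus B1) _ hd2R _ hrhoA0 hR
          · linarith
          · have hmin1 : min (rhoPlus B1) (rhoMinus B1) = rhoMinus B1 :=
              min_eq_right (by linarith)
            rw [hmin1] at hrhoAge1; linarith
        have h1md : 1 - rhoMinus B1 ≤ d := by linarith
        have habs : |gfun (rhoMinus B1) - cF/2| = gfun 1 - gfun (rhoMinus B1) := by
          rw [hcF]
          have e1 : gfun (rhoMinus B1) ≤ gfun 1 := gfun_mono h1m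
          rw [show gfun (rhoMinus B1) - 2 * gfun 1 / 2
            = -(gfun 1 - gfun (rhoMinus B1)) by ring,
            abs_neg, abs_of_nonneg (by linarith)]
        rw [habs]
        exact cross_est hm1 h1m h1md hKge hd0
  · by_cases h1p : rhoPlus B1 ≤ 1
    · by_cases h2m : rhoMinus B2 ≤ 1
      · rw [dF_eq2 B1 h1m h1p, dF_eq1 B2 h2m]
        -- case (2,1)
        push_neg at h1m
        have hKge : 1/Real.sqrt 2 ≤ K := by
          apply K_ge (r := rhoPlus B1) _ hd2R _ hrhoA0 hR
          · linarith
          · have hmin1 : min (rhoPlus B1) (rhoMinus B1) = rhoPlus B1 :=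
              min_eq_left (by linarith)
            rw [hmin1] at hrhoAge1; linarith
        have hsumle : (1 - rhoPlus B1) + (1 - rhoMinus B2) ≤ d := by linarith
        have habs : |cF - gfun (rhoPlus B1) - gfun (rhoMinus B2)| ≤
            (gfun 1 - gfun (rhoPlus B1)) + (gfun 1 - gfun (rhoMinus B2)) := by
          rw [hcF]
          have e1 : gfun (rhoPlus B1) ≤ gfun 1 := gfun_mono h1p
          have e2 : gfun (rhoMinus B2) ≤ gfun 1 := gfun_mono h2m
          rw [abs_le]; constructor <;> [linarith; linarith]
        refine le_trans habs (cross2_est hp1 h1p hm2 h2m hsumle hKge hd0)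
      · by_cases h2p : rhoPlus B2 ≤ 1
        · rw [dF_eq2 B1 h1m h1p, dF_eq2 B2 h2m h2p]
          -- case (2,2)
          push_neg at h1m h2m
          have hmin1 : min (rhoPlus B1) (rhoMinus B1) = rhoPlus B1 :=
            min_eq_left (by linarith)
          have hmin2 : min (rhoPlus B2) (rhoMinus B2) = rhoPlus B2 :=
            min_eq_left (by linarith)
          have hco1 : fpl (rhoPlus B1) / Real.sqrt 2 ≤ fpl rhoA / Real.sqrt 2 + 2*R := by
            apply hcoK _ hp1; rw [← hmin1]; exact hfpl1
          have hco2 : fpl (rhoPlus B2) / Real.sqrt 2 ≤ fpl rhoA / Real.sqrt 2 + 2*R := by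
            apply hcoK _ hp2; rw [← hmin2]; exact hfpl2
          have := gfun_abs_est hp1 hp2 h1p h2p hco1 hco2 hplip
          have heq : cF - gfun (rhoPlus B1) - (cF - gfun (rhoPlus B2))
              = -(gfun (rhoPlus B1) - gfun (rhoPlus B2)) := by ring
          rw [heq, abs_neg]
          calc |gfun (rhoPlus B1) - gfun (rhoPlus B2)|
              ≤ (fpl rhoA / Real.sqrt 2 + 2*R) * d := this
            _ ≤ K * d := mul_le_mul_of_nonneg_right hco_le hd0
        · rw [dF_eq2 B1 h1m h1p, dF_eq3 B2 h2m h2p]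
          -- case (2,3)
          push_neg at h1m h2m h2p
          have hKge : 1/Real.sqrt 2 ≤ K := by
            apply K_ge (r := rhoPlus B1) _ hd2R _ hrhoA0 hR
            · linarith
            · have hmin1 : min (rhoPlus B1) (rhoMinus B1) = rhoPlus B1 :=
                min_eq_left (by linarith)
              rw [hmin1] at hrhoAge1; linarith
          have h1pd : 1 - rhoPlus B1 ≤ d := by linarith
          have habs : |cF - gfun (rhoPlus B1) - cF/2| = gfun 1 - gfun (rhoPlus B1) := by
            rw [hcF]
            have e1 : gfun (rhoPlus B1) ≤ gfun 1 := gfun_mono h1p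
            rw [show 2 * gfun 1 - gfun (rhoPlus B1) - 2 * gfun 1 / 2
              = gfun 1 - gfun (rhoPlus B1) by ring, abs_of_nonneg (by linarith)]
          rw [habs]
          exact cross_est hp1 h1p h1pd hKge hd0
    · by_cases h2m : rhoMinus B2 ≤ 1
      · rw [dF_eq3 B1 h1m h1p, dF_eq1 B2 h2m]
        -- case (3,1)
        push_neg at h1m h1p
        have hKge : 1/Real.sqrt 2 ≤ K := by
          apply K_ge (r := rhoMinus B2) _ hd2R _ hrhoA0 hR
          · linarith
          · have hmin2 : min (rhoPlus B2) (rhoMinus B2) = rhoMinus B2 :=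
              min_eq_right (by linarith)
            rw [hmin2] at hrhoAge2; linarith
        have h2md : 1 - rhoMinus B2 ≤ d := by linarith
        have habs : |cF/2 - gfun (rhoMinus B2)| = gfun 1 - gfun (rhoMinus B2) := by
          rw [hcF]
          have e1 : gfun (rhoMinus B2) ≤ gfun 1 := gfun_mono h2m
          rw [show 2 * gfun 1 / 2 - gfun (rhoMinus B2)
            = gfun 1 - gfun (rhoMinus B2) by ring, abs_of_nonneg (by linarith)]
        rw [habs]
        exact cross_est hm2 h2m h2md hKge hd0
      · by_cases h2p : rhoPlus B2 ≤ 1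
        · rw [dF_eq3 B1 h1m h1p, dF_eq2 B2 h2m h2p]
          -- case (3,2)
          push_neg at h1m h1p h2m
          have hKge : 1/Real.sqrt 2 ≤ K := by
            apply K_ge (r := rhoPlus B2) _ hd2R _ hrhoA0 hR
            · linarith
            · have hmin2 : min (rhoPlus B2) (rhoMinus B2) = rhoPlus B2 :=
                min_eq_left (by linarith)
              rw [hmin2] at hrhoAge2; linarith
          have h2pd : 1 - rhoPlus B2 ≤ d := by linarith
          have habs : |cF/2 - (cF - gfun (rhoPlus B2))| = gfun 1 - gfun (rhoPlus B2) := by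
            rw [hcF]
            have e1 : gfun (rhoPlus B2) ≤ gfun 1 := gfun_mono h2p
            rw [show 2 * gfun 1 / 2 - (2 * gfun 1 - gfun (rhoPlus B2))
              = -(gfun 1 - gfun (rhoPlus B2)) by ring, abs_neg,
              abs_of_nonneg (by linarith)]
          rw [habs]
          exact cross_est hp2 h2p h2pd hKge hd0
        · rw [dF_eq3 B1 h1m h1p, dF_eq3 B2 h2m h2p]
          simp only [sub_self, abs_zero]
          exact mul_nonneg hK0 hd0

end DFLipMain

section Conv
open Measure
open scoped Convolution
variable {n : ℕ}

local instance : BorelSpace (Matrix (Fin n) (Fin n) ℝ) := Pi.borelSpace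
local instance : Measure.IsAddHaarMeasure (volume : Measure (Matrix (Fin n) (Fin n) ℝ)) :=
  by
    have : ∀ _ : Fin n, Measure.IsAddHaarMeasure (volume : Measure (Fin n → ℝ)) :=
      fun _ => inferInstance
    exact (Measure.pi.isAddHaarMeasure _ :
      Measure.IsAddHaarMeasure (volume : Measure (Fin n → Fin n → ℝ)))
local instance : SFinite (volume : Measure (Matrix (Fin n) (Fin n) ℝ)) :=
  inferInstanceAs (SFinite (volume : Measure (Fin n → Fin n → ℝ)))
local instance : Measure.IsNegInvariant (volume : Measure (Matrix (Fin n) (Fin n) ℝ)) :=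
  inferInstanceAs (Measure.IsNegInvariant (volume : Measure (Fin n → Fin n → ℝ)))
local instance : Measure.IsAddLeftInvariant (volume : Measure (Matrix (Fin n) (Fin n) ℝ)) :=
  inferInstanceAs (Measure.IsAddLeftInvariant (volume : Measure (Fin n → Fin n → ℝ)))
local instance instBorelFro : @BorelSpace (Matrix (Fin n) (Fin n) ℝ)
    (@UniformSpace.toTopologicalSpace _ (@PseudoMetricSpace.toUniformSpace _
      (@SeminormedAddCommGroup.toPseudoMetricSpace _ (@NormedAddCommGroup.toSeminormedAddCommGroup _
      (Matrix.frobeniusNormedAddCommGroup (m := Fin n) (n := Fin n) (α := ℝ)))))) _ := Pi.borelSpace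
local instance instHaarFro : @Measure.IsAddHaarMeasure (Matrix (Fin n) (Fin n) ℝ) _
    (@UniformSpace.toTopologicalSpace _ (@PseudoMetricSpace.toUniformSpace _
      (@SeminormedAddCommGroup.toPseudoMetricSpace _ (@NormedAddCommGroup.toSeminormedAddCommGroup _
      (Matrix.frobeniusNormedAddCommGroup (m := Fin n) (n := Fin n) (α := ℝ)))))) _ volume := by
  have : ∀ _ : Fin n, Measure.IsAddHaarMeasure (volume : Measure (Fin n → ℝ)) :=
    fun _ => inferInstance
  exact (Measure.pi.isAddHaarMeasure _ :
    Measure.IsAddHaarMeasure (volume : Measure (Fin n → Fin n → ℝ)))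
local instance : IsLocallyFiniteMeasure (volume : Measure (Matrix (Fin n) (Fin n) ℝ)) :=
  inferInstanceAs (IsLocallyFiniteMeasure (volume : Measure (Fin n → Fin n → ℝ)))

lemma gfun_zero : gfun 0 = 0 := intervalIntegral.integral_same

lemma gfun_nonneg {r : ℝ} (hr : 0 ≤ r) : 0 ≤ gfun r := by
  have := gfun_mono hr
  rwa [gfun_zero] at this

lemma dF_nonneg (B : Matrix (Fin n) (Fin n) ℝ) : 0 ≤ dF B := by
  unfold dF
  have hg1 : 0 ≤ gfun 1 := gfun_nonneg zero_le_one
  split_ifs with h1 h2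
  · exact gfun_nonneg (rhoMinus_nonneg B)
  · have : gfun (rhoPlus B) ≤ gfun 1 := gfun_mono h2
    unfold cF; linarith
  · unfold cF; linarith

lemma dF_le_cF (B : Matrix (Fin n) (Fin n) ℝ) : dF B ≤ cF := by
  unfold dF
  have hg1 : 0 ≤ gfun 1 := gfun_nonneg zero_le_one
  split_ifs with h1 h2
  · have : gfun (rhoMinus B) ≤ gfun 1 := gfun_mono h1
    unfold cF; linarith
  · have : 0 ≤ gfun (rhoPlus B) := gfun_nonneg (rhoPlus_nonneg B)
    linarith
  · unfold cF; linarith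

lemma dF_meas : Measurable (dF (n := n)) := by
  have hgm : Measurable gfun := gfun_mono.measurable
  have hm : Measurable (rhoMinus (n := n)) := by
    have : Continuous (rhoMinus (n := n)) := Metric.continuous_infDist_pt _
    exact this.measurable
  have hp : Measurable (rhoPlus (n := n)) := by
    have : Continuous (rhoPlus (n := n)) := Metric.continuous_infDist_pt _
    exact this.measurable
  unfold dF
  refine Measurable.ite ?_ (hgm.comp hm) (Measurable.ite ?_
    (measurable_const.sub (hgm.comp hp)) measurable_const)
  · exact measurableSet_le hm measurable_const
  · exact measurableSet_le hp measurable_const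

lemma dF_locInt : LocallyIntegrable (dF (n := n)) volume := by
  apply (locallyIntegrable_const cF).mono dF_meas.aestronglyMeasurable
  filter_upwards with B
  rw [Real.norm_eq_abs, Real.norm_eq_abs, abs_of_nonneg (dF_nonneg B)]
  calc dF B ≤ cF := dF_le_cF B
    _ ≤ |cF| := le_abs_self cF

variable {φ : Matrix (Fin n) (Fin n) ℝ → ℝ} {ε : ℝ}

lemma moll_contDiff (hφ : ContDiff ℝ (⊤ : ℕ∞) φ) : ContDiff ℝ 1 (mollifier φ ε) := by
  have h1 : ContDiff ℝ (⊤ : ℕ∞) fun x : Matrix (Fin n) (Fin n) ℝ => φ ((ε ^ 5)⁻¹ • x) :=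
    hφ.comp (contDiff_id.const_smul ((ε ^ 5)⁻¹))
  have h2 : ContDiff ℝ (⊤ : ℕ∞) (mollifier φ ε) := by
    have := h1.const_smul ((ε ^ (n ^ 2 * 5))⁻¹)
    convert this using 2 with x
    rfl
  exact h2.of_le (by simp)

lemma moll_cont (hφ : ContDiff ℝ (⊤ : ℕ∞) φ) : Continuous (mollifier φ ε) :=
  (moll_contDiff hφ).continuous

lemma moll_supp (hφsupp : Function.support φ ⊆ Metric.closedBall 0 1) (hε : 0 < ε) :
    Function.support (mollifier φ ε) ⊆ Metric.closedBall 0 (ε ^ 5) := by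
  intro x hx
  have h1 : φ ((ε ^ 5)⁻¹ • x) ≠ 0 := by
    intro h0
    apply hx
    unfold mollifier
    rw [h0, mul_zero]
  have h2 : (ε ^ 5)⁻¹ • x ∈ Metric.closedBall (0 : Matrix (Fin n) (Fin n) ℝ) 1 :=
    hφsupp h1
  rw [Metric.mem_closedBall, dist_zero_right] at h2 ⊢
  rw [norm_smul, Real.norm_eq_abs, abs_of_nonneg (by positivity : (0:ℝ) ≤ (ε ^ 5)⁻¹)] at h2
  have hε5 : (0:ℝ) < ε ^ 5 := by positivity
  calc ‖x‖ = ε ^ 5 * ((ε ^ 5)⁻¹ * ‖x‖) := by field_simp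
    _ ≤ ε ^ 5 * 1 := by
        apply mul_le_mul_of_nonneg_left h2 hε5.le
    _ = ε ^ 5 := mul_one _

lemma moll_cpt (hφsupp : Function.support φ ⊆ Metric.closedBall 0 1) (hε : 0 < ε) :
    HasCompactSupport (mollifier φ ε) := by
  apply HasCompactSupport.intro (isCompact_closedBall (0 : Matrix (Fin n) (Fin n) ℝ) (ε ^ 5))
  intro x hx
  by_contra h0
  exact hx (moll_supp hφsupp hε (Function.mem_support.mpr h0))

lemma moll_nonneg (hφnonneg : ∀ A, 0 ≤ φ A) (hε : 0 < ε)
    (x : Matrix (Fin n) (Fin n) ℝ) : 0 ≤ mollifier φ ε x :=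
  mul_nonneg (by positivity) (hφnonneg _)

lemma moll_int1 (hφint : ∫ A, φ A = 1) (hε : 0 < ε) :
    ∫ t, mollifier φ ε t = 1 := by
  unfold mollifier
  rw [integral_const_mul]
  rw [integral_comp_smul volume φ ((ε ^ 5)⁻¹)]
  have hfr : Module.finrank ℝ (Matrix (Fin n) (Fin n) ℝ) = n * n := by
    rw [Module.finrank_matrix]; simp
  rw [hfr, hφint, smul_eq_mul, mul_one]
  rw [show (((ε ^ 5)⁻¹) ^ (n * n))⁻¹ = ε ^ (5 * (n * n)) by
    rw [← inv_pow, inv_inv, ← pow_mul]]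
  rw [abs_of_nonneg (by positivity : (0:ℝ) ≤ ε ^ (5 * (n * n)))]
  rw [show n ^ 2 * 5 = 5 * (n * n) by ring]
  field_simp

lemma moll_integrable (hφ : ContDiff ℝ (⊤ : ℕ∞) φ)
    (hφsupp : Function.support φ ⊆ Metric.closedBall 0 1) (hε : 0 < ε) :
    Integrable (mollifier φ ε) volume :=
  (moll_cont hφ).integrable_of_hasCompactSupport (moll_cpt hφsupp hε)

lemma translated_integrable (hφ : ContDiff ℝ (⊤ : ℕ∞) φ)
    (hφsupp : Function.support φ ⊆ Metric.closedBall 0 1) (hε : 0 < ε)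
    (x : Matrix (Fin n) (Fin n) ℝ) :
    Integrable (fun B => mollifier φ ε (x - B) * dF B) volume := by
  have hcont : Continuous fun B : Matrix (Fin n) (Fin n) ℝ => mollifier φ ε (x - B) :=
    (moll_cont hφ).comp (continuous_const.sub continuous_id)
  have hcpt : HasCompactSupport fun B : Matrix (Fin n) (Fin n) ℝ => mollifier φ ε (x - B) := by
    apply HasCompactSupport.intro (isCompact_closedBall x (ε ^ 5))
    intro B hB
    by_contra h0
    have := moll_supp hφsupp hε (Function.mem_support.mpr h0)
    rw [Metric.mem_closedBall, dist_zero_right] at this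
    apply hB
    rw [Metric.mem_closedBall, dist_comm, dist_eq_norm]
    exact this
  have := dF_locInt.integrable_smul_left_of_hasCompactSupport hcont hcpt
  simpa [smul_eq_mul] using this

lemma flipped_integrable (hφ : ContDiff ℝ (⊤ : ℕ∞) φ)
    (hφsupp : Function.support φ ⊆ Metric.closedBall 0 1) (hε : 0 < ε)
    (x : Matrix (Fin n) (Fin n) ℝ) :
    Integrable (fun t => mollifier φ ε t * dF (x - t)) volume := by
  have h := (translated_integrable hφ hφsupp hε x).comp_sub_left x
  simpa using h

lemma dFeps_flip (x : Matrix (Fin n) (Fin n) ℝ) :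
    dFeps φ ε x = ∫ t, mollifier φ ε t * dF (x - t) := by
  unfold dFeps
  rw [← integral_sub_left_eq_self (fun B => mollifier φ ε (x - B) * dF B) volume x]
  congr 1
  funext t
  simp

lemma dFeps_eq_conv :
    dFeps φ ε = MeasureTheory.convolution (mollifier φ ε) dF
      (ContinuousLinearMap.mul ℝ ℝ) volume := by
  funext x
  rw [dFeps_flip, convolution_def]
  congr 1

lemma dFeps_differentiable (hφ : ContDiff ℝ (⊤ : ℕ∞) φ)
    (hφsupp : Function.support φ ⊆ Metric.closedBall 0 1) (hε : 0 < ε)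
    (x : Matrix (Fin n) (Fin n) ℝ) : DifferentiableAt ℝ (dFeps φ ε) x := by
  rw [dFeps_eq_conv]
  exact ((moll_cpt hφsupp hε).hasFDerivAt_convolution_left (ContinuousLinearMap.mul ℝ ℝ)
    (moll_contDiff hφ) dF_locInt x).differentiableAt

lemma dFeps_lip (hn : 1 ≤ n) (hφ : ContDiff ℝ (⊤ : ℕ∞) φ)
    (hφnonneg : ∀ A, 0 ≤ φ A)
    (hφsupp : Function.support φ ⊆ Metric.closedBall 0 1)
    (hφint : ∫ A, φ A = 1) (hε : 0 < ε)
    (A : Matrix (Fin n) (Fin n) ℝ) {A1 A2 : Matrix (Fin n) (Fin n) ℝ}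
    (h1 : ‖A1 - A‖ ≤ ε ^ 5) (h2 : ‖A2 - A‖ ≤ ε ^ 5) :
    |dFeps φ ε A1 - dFeps φ ε A2| ≤
      (fpl (min (rhoPlus A) (rhoMinus A)) / Real.sqrt 2 + 6 * (2 * ε ^ 5)) * ‖A1 - A2‖ := by
  set K := fpl (min (rhoPlus A) (rhoMinus A)) / Real.sqrt 2 + 6 * (2 * ε ^ 5) with hKdef
  have hrhoA0 : 0 ≤ min (rhoPlus A) (rhoMinus A) :=
    le_min (rhoPlus_nonneg A) (rhoMinus_nonneg A)
  have hK0 : 0 ≤ K := by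
    have := div_nonneg (fpl_nonneg hrhoA0) (Real.sqrt_nonneg 2)
    have hε5 : (0:ℝ) ≤ ε ^ 5 := by positivity
    rw [hKdef]; linarith
  have hI1 := flipped_integrable hφ hφsupp hε A1
  have hI2 := flipped_integrable hφ hφsupp hε A2
  rw [dFeps_flip, dFeps_flip, ← integral_sub hI1 hI2, ← Real.norm_eq_abs]
  have hbound : ∀ t, ‖mollifier φ ε t * dF (A1 - t) - mollifier φ ε t * dF (A2 - t)‖ ≤
      mollifier φ ε t * (K * ‖A1 - A2‖) := by
    intro t
    rcases eq_or_ne (mollifier φ ε t) 0 with h0 | h0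
    · rw [h0]; simp
    · have htsupp := moll_supp hφsupp hε (Function.mem_support.mpr h0)
      rw [Metric.mem_closedBall, dist_zero_right] at htsupp
      have hB1 : ‖(A1 - t) - A‖ ≤ 2 * ε ^ 5 := by
        calc ‖(A1 - t) - A‖ = ‖(A1 - A) + (-t)‖ := by congr 1; abel
          _ ≤ ‖A1 - A‖ + ‖(-t)‖ := norm_add_le _ _
          _ ≤ ε ^ 5 + ε ^ 5 := by rw [norm_neg]; exact add_le_add h1 htsupp
          _ = 2 * ε ^ 5 := by ring
      have hB2 : ‖(A2 - t) - A‖ ≤ 2 * ε ^ 5 := by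
        calc ‖(A2 - t) - A‖ = ‖(A2 - A) + (-t)‖ := by congr 1; abel
          _ ≤ ‖A2 - A‖ + ‖(-t)‖ := norm_add_le _ _
          _ ≤ ε ^ 5 + ε ^ 5 := by rw [norm_neg]; exact add_le_add h2 htsupp
          _ = 2 * ε ^ 5 := by ring
      have hdf := dF_lip_on hn A (by positivity : (0:ℝ) ≤ 2 * ε ^ 5) hB1 hB2
      have hAA : (A1 - t) - (A2 - t) = A1 - A2 := by abel
      rw [hAA] at hdf
      have hm0 : 0 ≤ mollifier φ ε t := moll_nonneg hφnonneg hε t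
      rw [show mollifier φ ε t * dF (A1 - t) - mollifier φ ε t * dF (A2 - t)
        = mollifier φ ε t * (dF (A1 - t) - dF (A2 - t)) by ring]
      rw [Real.norm_eq_abs, abs_mul, abs_of_nonneg hm0]
      exact mul_le_mul_of_nonneg_left hdf hm0
  calc ‖∫ t, (mollifier φ ε t * dF (A1 - t) - mollifier φ ε t * dF (A2 - t))‖
      ≤ ∫ t, ‖mollifier φ ε t * dF (A1 - t) - mollifier φ ε t * dF (A2 - t)‖ :=
        norm_integral_le_integral_norm _
    _ ≤ ∫ t, mollifier φ ε t * (K * ‖A1 - A2‖) := by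
        apply integral_mono (hI1.sub hI2).norm
          ((moll_integrable hφ hφsupp hε).mul_const _)
        exact hbound
    _ = K * ‖A1 - A2‖ := by
        rw [integral_mul_const, moll_int1 hφint hε, one_mul]

end Conv

theorem stmt17 {n : ℕ} (hn : 1 ≤ n) (φ : Matrix (Fin n) (Fin n) ℝ → ℝ)
    (hφsmooth : ContDiff ℝ (⊤ : ℕ∞) φ) (hφnonneg : ∀ A, 0 ≤ φ A)
    (hφsupp : Function.support φ ⊆ Metric.closedBall 0 1)
    (hφint : ∫ A, φ A = 1) :
    ∀ C' > (0 : ℝ), ∃ ε₀ > (0 : ℝ), ∀ ε : ℝ, 0 < ε → ε < ε₀ →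
      ∀ A : Matrix (Fin n) (Fin n) ℝ, ‖A‖ ≤ C' →
        DifferentiableAt ℝ (dFeps φ ε) A ∧
        @norm _ (@ContinuousLinearMap.hasOpNorm ℝ ℝ (Matrix (Fin n) (Fin n) ℝ) ℝ _ _ _ _ _ _
          (RingHom.id ℝ)) (fderiv ℝ (dFeps φ ε) A) ≤ Real.sqrt (2 * (potF A + ε ^ 4)) := by
  intro C' _
  refine ⟨1/100, by norm_num, ?_⟩
  intro ε hε hε0 A _
  have hε5 : (0:ℝ) < ε ^ 5 := by positivity
  constructor
  · exact dFeps_differentiable hφsmooth hφsupp hε A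
  · -- Lipschitz bound.
    set K := fpl (min (rhoPlus A) (rhoMinus A)) / Real.sqrt 2 + 6 * (2 * ε ^ 5) with hKdef
    have hrhoA0 : 0 ≤ min (rhoPlus A) (rhoMinus A) :=
      le_min (rhoPlus_nonneg A) (rhoMinus_nonneg A)
    have hfd0 : 0 ≤ fpl (min (rhoPlus A) (rhoMinus A)) / Real.sqrt 2 :=
      div_nonneg (fpl_nonneg hrhoA0) (Real.sqrt_nonneg 2)
    have hK0 : 0 ≤ K := by rw [hKdef]; positivity
    have hlip : LipschitzOnWith (Real.toNNReal K) (dFeps φ ε) (Metric.closedBall A (ε ^ 5)) := by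
      apply LipschitzOnWith.of_dist_le_mul
      intro x hx y hy
      rw [Metric.mem_closedBall, dist_eq_norm] at hx hy
      rw [Real.dist_eq, dist_eq_norm, Real.coe_toNNReal _ hK0]
      exact dFeps_lip hn hφsmooth hφnonneg hφsupp hφint hε A hx hy
    have hfder : @norm _ (@ContinuousLinearMap.hasOpNorm ℝ ℝ (Matrix (Fin n) (Fin n) ℝ) ℝ _ _ _ _ _ _
        (RingHom.id ℝ)) (fderiv ℝ (dFeps φ ε) A) ≤ K := by
      have h := norm_fderiv_le_of_lipschitzOn ℝ
        (Metric.closedBall_mem_nhds A hε5) hlip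
      rwa [Real.coe_toNNReal _ hK0] at h
    refine le_trans hfder ?_
    -- final numeric estimate
    have hpot0 : 0 ≤ potF A := by unfold potF; positivity
    rw [Real.le_sqrt hK0 (by positivity)]
    have hkey : fpl (min (rhoPlus A) (rhoMinus A)) ≤ ‖A * Aᵀ - 1‖ := key A
    set u := fpl (min (rhoPlus A) (rhoMinus A)) / Real.sqrt 2 with hudef
    have hu1 : u ≤ 1 := by
      rw [hudef]
      calc fpl (min (rhoPlus A) (rhoMinus A)) / Real.sqrt 2
          ≤ fpl (min (rhoPlus A) (rhoMinus A)) := div_le_self (fpl_nonneg hrhoA0) one_le_sqrt2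
        _ ≤ 1 := fpl_le_one _
    have husq : u^2 ≤ 2 * potF A := by
      rw [hudef, div_pow, Real.sq_sqrt (by norm_num : (0:ℝ) ≤ 2)]
      have h1 : fpl (min (rhoPlus A) (rhoMinus A))^2 ≤ ‖A * Aᵀ - 1‖^2 :=
        pow_le_pow_left₀ (fpl_nonneg hrhoA0) hkey 2
      unfold potF
      nlinarith
    have hεle : ε ≤ 1/100 := hε0.le
    have hK2 : K^2 = u^2 + 24 * u * ε^5 + 144 * ε^10 := by
      rw [hKdef]; ring
    rw [hK2]
    have he5 : ε^5 = ε^4 * ε := by ring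
    have he10 : ε^10 = ε^4 * ε^6 := by ring
    have he6 : ε^6 ≤ ε := by
      calc ε^6 ≤ ε^1 := pow_le_pow_of_le_one hε.le (by linarith) (by norm_num)
        _ = ε := pow_one ε
    have hε4 : (0:ℝ) < ε^4 := by positivity
    nlinarith [mul_le_mul_of_nonneg_left hεle hε4.le, mul_le_mul_of_nonneg_left he6 hε4.le,
      mul_nonneg (mul_nonneg (by norm_num : (0:ℝ) ≤ 24) hfd0) hε5.le,
      mul_le_mul_of_nonneg_right hu1 hε5.le]
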